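/- arXiv:math/0111175 — 2 statements merged into one kernel-verified Lean document; each statement's English description precedes it below -/
import Mathlib

section
/- For all positive real numbers s and r, the integral over t ∈ (0,∞) of e^{−s²t} · e^{−r²/(4t)} / (4πt)^{3/2} dt equals e^{−sr}/(4πr). -/
/-!
Substituting `t = x²` and completing the square, `s²x² + r²/(4x²) = (sx - b/x)² + sr` with
`b = r/2`, turns the integral into `e^{-sr}/(4π√π) ∫₀^∞ e^{-(sx - b/x)²} x⁻² dx`. For `a, b > 0`
the map `x ↦ ax - b/x` is a diffeomorphism of `(0, ∞)` onto `ℝ` with derivative `a + b/x²`, so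
`∫₀^∞ (a + b/x²) e^{-(ax - b/x)²} dx = ∫_ℝ e^{-y²} dy = √π`. The inversion `x ↦ b/(ax)` changes the
sign of `ax - b/x` and exchanges the two summands `a e^{-(ax - b/x)²}` and `b x⁻² e^{-(ax - b/x)²}`,
so each of them integrates to `√π / 2`.
-/

open Real MeasureTheory Set

section
variable {E : Type*} [NormedAddCommGroup E] [NormedSpace ℝ E] {a b : ℝ}

theorem hasDerivAt_mul_sub_div {x : ℝ} (hx : x ≠ 0) :
    HasDerivAt (fun x => a * x - b / x) (a + b / x ^ 2) x := by
  rw [show a + b / x ^ 2 = a * 1 - b * -(x ^ 2)⁻¹ by ring]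
  exact ((hasDerivAt_id' x).const_mul a).sub ((hasDerivAt_inv hx).const_mul b)

theorem strictMonoOn_mul_sub_div (ha : 0 ≤ a) (hb : 0 < b) :
    StrictMonoOn (fun x => a * x - b / x) (Ioi 0) := by
  intro x hx y _ hxy
  have : a * x ≤ a * y := by gcongr
  have : b / y < b / x := div_lt_div_of_pos_left hb hx hxy
  linarith

theorem image_mul_sub_div_Ioi (ha : 0 < a) (hb : 0 < b) :
    (fun x => a * x - b / x) '' Ioi 0 = univ := by
  refine eq_univ_of_forall fun y => ?_
  set w := √(y ^ 2 + 4 * a * b)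
  have hw : w ^ 2 = y ^ 2 + 4 * a * b := sq_sqrt (by positivity)
  have hyw : 0 < y + w := by
    nlinarith [abs_lt_of_sq_lt_sq' (show y ^ 2 < w ^ 2 by nlinarith) (sqrt_nonneg _)]
  -- the positive root of `a x² - y x - b`
  refine ⟨(y + w) / (2 * a), div_pos hyw (by positivity), ?_⟩
  field_simp
  nlinarith

theorem integral_Ioi_smul_comp_mul_sub_div (ha : 0 < a) (hb : 0 < b) (f : ℝ → E) :
    ∫ x in Ioi 0, (a + b / x ^ 2) • f (a * x - b / x) = ∫ y, f y := by
  have := integral_image_eq_integral_abs_deriv_smul measurableSet_Ioi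
    (fun x hx => (hasDerivAt_mul_sub_div (mem_Ioi.mp hx).ne').hasDerivWithinAt)
    (strictMonoOn_mul_sub_div ha.le hb).injOn f
  rw [image_mul_sub_div_Ioi ha hb, setIntegral_univ] at this
  rw [this]
  refine setIntegral_congr_fun measurableSet_Ioi fun x _ => ?_
  rw [abs_of_pos (by positivity)]

theorem integrableOn_Ioi_smul_comp_mul_sub_div_iff (ha : 0 < a) (hb : 0 < b) (f : ℝ → E) :
    IntegrableOn (fun x => (a + b / x ^ 2) • f (a * x - b / x)) (Ioi 0) ↔ Integrable f := by
  have := integrableOn_image_iff_integrableOn_abs_deriv_smul measurableSet_Ioi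
    (fun x hx => (hasDerivAt_mul_sub_div (mem_Ioi.mp hx).ne').hasDerivWithinAt)
    (strictMonoOn_mul_sub_div ha.le hb).injOn f
  rw [image_mul_sub_div_Ioi ha hb, integrableOn_univ] at this
  rw [this]
  refine integrableOn_congr_fun (fun x _ => ?_) measurableSet_Ioi
  rw [abs_of_pos (by positivity)]

theorem integral_Ioi_smul_comp_div {c : ℝ} (hc : 0 < c) (f : ℝ → E) :
    ∫ x in Ioi 0, (c / x ^ 2) • f (c / x) = ∫ x in Ioi 0, f x := by
  have himage : (fun x => c / x) '' Ioi 0 = Ioi 0 :=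
    Subset.antisymm (image_subset_iff.mpr fun x hx => div_pos hc hx) fun x hx =>
      ⟨c / x, div_pos hc hx, div_div_cancel₀ hc.ne'⟩
  have hderiv (x : ℝ) (hx : x ∈ Ioi 0) :
      HasDerivWithinAt (fun x => c / x) (-(c / x ^ 2)) (Ioi 0) x := by
    rw [show -(c / x ^ 2) = c * -(x ^ 2)⁻¹ by ring]
    exact ((hasDerivAt_inv (mem_Ioi.mp hx).ne').const_mul c).hasDerivWithinAt
  have hanti : StrictAntiOn (fun x => c / x) (Ioi 0) := fun x hx _ _ hxy =>
    div_lt_div_of_pos_left hc hx hxy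
  conv_rhs => rw [← himage, integral_image_eq_integral_abs_deriv_smul measurableSet_Ioi hderiv
    hanti.injOn]
  refine setIntegral_congr_fun measurableSet_Ioi fun x hx => ?_
  rw [abs_neg, abs_of_pos (div_pos hc (pow_pos (mem_Ioi.mp hx) 2))]
end

theorem integral_Ioi_exp_neg_sq_mul_sub_div_div_sq {a b : ℝ} (ha : 0 < a) (hb : 0 < b) :
    ∫ x in Ioi 0, exp (-(a * x - b / x) ^ 2) / x ^ 2 = √π / (2 * b) := by
  set g : ℝ → ℝ := fun x => exp (-(a * x - b / x) ^ 2)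
  have hM_int : IntegrableOn (fun x => (a + b / x ^ 2) * g x) (Ioi 0) :=
    (integrableOn_Ioi_smul_comp_mul_sub_div_iff ha hb fun y => exp (-y ^ 2)).mpr
      (by simpa using integrable_exp_neg_mul_sq one_pos)
  have hM : ∫ x in Ioi 0, (a + b / x ^ 2) * g x = √π :=
    (integral_Ioi_smul_comp_mul_sub_div ha hb fun y => exp (-y ^ 2)).trans
      (by simpa using integral_gaussian 1)
  have hL_int : IntegrableOn (fun x => a * g x) (Ioi 0) := by
    refine hM_int.mono' (by fun_prop : Measurable _).aestronglyMeasurable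
      (ae_restrict_of_forall_mem measurableSet_Ioi fun x _ => ?_)
    rw [norm_of_nonneg (by positivity)]
    gcongr
    exact le_add_of_nonneg_right (by positivity)
  have hK_int : IntegrableOn (fun x => b * (g x / x ^ 2)) (Ioi 0) := by
    refine hM_int.mono' (by fun_prop : Measurable _).aestronglyMeasurable
      (ae_restrict_of_forall_mem measurableSet_Ioi fun x _ => ?_)
    calc ‖b * (g x / x ^ 2)‖ = b / x ^ 2 * g x := by rw [norm_of_nonneg (by positivity)]; ring
      _ ≤ (a + b / x ^ 2) * g x := by gcongr; exact le_add_of_nonneg_left ha.le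
  -- the inversion `x ↦ b / (a x)` maps `a x - b / x` to its negative
  have hLK : ∫ x in Ioi 0, a * g x = ∫ x in Ioi 0, b * (g x / x ^ 2) := by
    rw [← integral_Ioi_smul_comp_div (div_pos hb ha)]
    refine setIntegral_congr_fun measurableSet_Ioi fun x hx => ?_
    have hx : x ≠ 0 := (mem_Ioi.mp hx).ne'
    have hneg : a * (b / a / x) - b / (b / a / x) = -(a * x - b / x) := by
      field_simp
      ring
    simp only [g, smul_eq_mul, hneg, neg_sq]
    field_simp
  have hsplit : ∫ x in Ioi 0, (a + b / x ^ 2) * g x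
      = (∫ x in Ioi 0, a * g x) + ∫ x in Ioi 0, b * (g x / x ^ 2) := by
    rw [← integral_add hL_int hK_int]
    congr 1 with x
    ring
  rw [hM, hLK, integral_const_mul] at hsplit
  change ∫ x in Ioi 0, g x / x ^ 2 = _
  field_simp
  linarith

theorem four_pi_mul_sq_rpow_three_halves {x : ℝ} (hx : 0 ≤ x) :
    (4 * π * x ^ 2) ^ ((3 : ℝ) / 2) = 8 * π * √π * x ^ 3 := by
  have hsq : 4 * π * x ^ 2 = (2 * √π * x) ^ 2 := by
    rw [mul_pow, mul_pow, sq_sqrt pi_pos.le]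
    ring
  rw [hsq, ← rpow_natCast, ← rpow_mul (by positivity),
    show ((2 : ℕ) : ℝ) * (3 / 2) = (3 : ℕ) by norm_num, rpow_natCast,
    show (2 * √π * x) ^ 3 = 8 * √π ^ 2 * √π * x ^ 3 by ring, sq_sqrt pi_pos.le]

/-- `∫₀^∞ e^{−s²t} e^{−r²/(4t)} / (4πt)^{3/2} dt = e^{−sr}/(4πr)` for `s, r > 0`. -/
theorem integral_heat_kernel_three_halves (s r : ℝ) (hs : 0 < s) (hr : 0 < r) :
    ∫ t in Set.Ioi (0 : ℝ),
        Real.exp (-s ^ 2 * t) * Real.exp (-r ^ 2 / (4 * t)) / (4 * π * t) ^ ((3 : ℝ) / 2)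
      = Real.exp (-(s * r)) / (4 * π * r) := by
  rw [← integral_comp_rpow_Ioi _ two_ne_zero]
  calc _ = ∫ x in Ioi 0,
        exp (-(s * r)) / (4 * π * √π) * (exp (-(s * x - r / 2 / x) ^ 2) / x ^ 2) := by
        refine setIntegral_congr_fun measurableSet_Ioi fun x (hx : 0 < x) => ?_
        have hexp : exp (-s ^ 2 * x ^ 2) * exp (-r ^ 2 / (4 * x ^ 2))
            = exp (-(s * r)) * exp (-(s * x - r / 2 / x) ^ 2) := by
          rw [← exp_add, ← exp_add]
          congr 1
          field_simp
          ring
        rw [rpow_two, show (2 : ℝ) - 1 = 1 by norm_num, rpow_one, abs_two, smul_eq_mul, hexp,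
          four_pi_mul_sq_rpow_three_halves hx.le]
        field_simp
        norm_num
    _ = exp (-(s * r)) / (4 * π * r) := by
        rw [integral_const_mul, integral_Ioi_exp_neg_sq_mul_sub_div_div_sq hs (half_pos hr)]
        field_simp
end

section
/- For all positive real numbers s and r, the integral over t ∈ (0,∞) of (1/√(4πt)) · e^{−(r²/(4t) + t s²)} dt equals e^{−rs}/(2s). -/
open Real MeasureTheory Set

private lemma heat_cont (s a : ℝ) :
    ContinuousOn (fun x : ℝ => Real.exp (-(s * x - a / x) ^ 2)) (Ioi 0) :=
  Real.continuous_exp.comp_continuousOn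
    ((((continuousOn_const.mul continuousOn_id).sub
      (continuousOn_const.div continuousOn_id fun x hx => ne_of_gt hx)).pow 2).neg)

private lemma heat_integrable (s a : ℝ) (hs : 0 < s) (ha : 0 < a) :
    IntegrableOn (fun x : ℝ => Real.exp (-(s * x - a / x) ^ 2)) (Ioi 0) := by
  apply Integrable.mono
    (((integrable_exp_neg_mul_sq (show (0:ℝ) < s ^ 2 by positivity)).const_mul
      (Real.exp (2 * a * s))).integrableOn)
    ((heat_cont s a).aestronglyMeasurable measurableSet_Ioi)
  filter_upwards [ae_restrict_mem measurableSet_Ioi] with x hx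
  have hx0 : (0:ℝ) < x := hx
  rw [Real.norm_eq_abs, Real.norm_eq_abs, abs_of_pos (Real.exp_pos _),
    abs_of_pos (by positivity), ← Real.exp_add]
  apply Real.exp_le_exp.2
  have h1 : a / x * x = a := div_mul_cancel₀ a hx0.ne'
  nlinarith [sq_nonneg (a / x), sq_nonneg (s * x - a / x)]

private lemma key_integral (s a : ℝ) (hs : 0 < s) (ha : 0 < a) :
    ∫ x in Ioi (0:ℝ), Real.exp (-(s * x - a / x) ^ 2) = Real.sqrt π / (2 * s) := by
  set h : ℝ → ℝ := fun x => Real.exp (-(s * x - a / x) ^ 2) with hh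
  -- substitution f x = (a/s) * x⁻¹
  set f : ℝ → ℝ := fun x => (a / s) * x⁻¹ with hf
  have hfim : f '' Ioi 0 = Ioi 0 := by
    ext y
    constructor
    · rintro ⟨x, hx, rfl⟩
      have hx0 : (0:ℝ) < x := hx
      exact mem_Ioi.2 (by positivity)
    · intro hy
      have hy0 : (0:ℝ) < y := hy
      refine ⟨a / (s * y), mem_Ioi.2 (by positivity), ?_⟩
      simp only [hf]
      field_simp
  have hfinj : InjOn f (Ioi 0) := by
    intro x hx y hy hxy
    simp only [hf] at hxy
    exact inv_injective (mul_left_cancel₀ (show a / s ≠ 0 by positivity) hxy)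
  have hfderiv : ∀ x ∈ Ioi (0:ℝ), HasDerivWithinAt f ((a/s) * (-(x^2)⁻¹)) (Ioi 0) x :=
    fun x hx => (((hasDerivAt_inv (ne_of_gt hx)).const_mul (a/s))).hasDerivWithinAt
  have habs : ∀ x ∈ Ioi (0:ℝ), |(a/s) * (-(x^2)⁻¹)| = a / (s * x^2) := by
    intro x hx
    have hx0 : (0:ℝ) < x := hx
    rw [abs_of_neg (by
      have h2 : (0:ℝ) < (a/s) * (x^2)⁻¹ := by positivity
      nlinarith)]
    field_simp
  have hcomp : ∀ x ∈ Ioi (0:ℝ),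
      (fun x => |(a/s) * (-(x^2)⁻¹)| • h (f x)) x = (fun x => a / (s * x^2) * h x) x := by
    intro x hx
    have hx0 : (0:ℝ) < x := hx
    simp only [smul_eq_mul]
    rw [habs x hx]
    congr 1
    simp only [hh, hf]
    congr 1
    have hfx : (0:ℝ) < a / s * x⁻¹ := by positivity
    field_simp
    ring
  -- step 1: h integral equals the transformed integral
  have step1 : ∫ x in Ioi (0:ℝ), h x = ∫ x in Ioi (0:ℝ), (a / (s * x^2)) * h x := by
    conv_lhs => rw [← hfim]
    rw [integral_image_eq_integral_abs_deriv_smul measurableSet_Ioi hfderiv hfinj h]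
    exact setIntegral_congr_fun measurableSet_Ioi hcomp
  -- step 1': the transformed integrand is integrable
  have step1' : IntegrableOn (fun x => (a / (s * x^2)) * h x) (Ioi 0) := by
    have := (integrableOn_image_iff_integrableOn_abs_deriv_smul measurableSet_Ioi
      hfderiv hfinj h).1 (by rw [hfim]; exact heat_integrable s a hs ha)
    exact this.congr_fun hcomp measurableSet_Ioi
  -- step 2: the Gaussian substitution ψ x = s x - a / x
  set ψ : ℝ → ℝ := fun x => s * x - a / x with hψ
  have hψim : ψ '' Ioi 0 = univ := by
    apply eq_univ_of_forall
    intro u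
    set d := Real.sqrt (u^2 + 4*a*s) with hd
    have hd2 : d^2 = u^2 + 4*a*s := Real.sq_sqrt (by positivity)
    have hdu : |u| < d := by
      rw [← Real.sqrt_sq_eq_abs, hd]
      exact Real.sqrt_lt_sqrt (sq_nonneg u) (by nlinarith)
    have hud : 0 < u + d := by
      have := neg_lt_of_abs_lt hdu
      linarith
    have hx0 : (0:ℝ) < (u + d) / (2*s) := by positivity
    refine ⟨(u + d)/(2*s), mem_Ioi.2 hx0, ?_⟩
    simp only [hψ]
    have h1 : u + d ≠ 0 := hud.ne'
    field_simp
    nlinarith [hd2]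
  have hψinj : InjOn ψ (Ioi 0) := by
    intro x hx y hy hxy
    have hx0 : (0:ℝ) < x := hx
    have hy0 : (0:ℝ) < y := hy
    simp only [hψ] at hxy
    have key : (x - y) * (s * x * y + a) = 0 := by
      field_simp at hxy
      nlinarith [hxy]
    rcases mul_eq_zero.1 key with h1 | h1
    · linarith [sub_eq_zero.1 h1]
    · exact absurd h1 (ne_of_gt (by positivity))
  have hψderiv : ∀ x ∈ Ioi (0:ℝ),
      HasDerivWithinAt ψ (s * 1 - a * (-(x^2)⁻¹)) (Ioi 0) x := by
    intro x hx
    have : HasDerivAt (fun x : ℝ => s * x - a * x⁻¹) (s * 1 - a * (-(x^2)⁻¹)) x :=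
      ((hasDerivAt_id x).const_mul s).sub ((hasDerivAt_inv (ne_of_gt hx)).const_mul a)
    simpa only [hψ, div_eq_mul_inv] using this.hasDerivWithinAt
  have step2 : ∫ x in Ioi (0:ℝ), (s + a / x^2) * h x = Real.sqrt π := by
    have him := integral_image_eq_integral_abs_deriv_smul measurableSet_Ioi hψderiv hψinj
      (fun u => Real.exp (-u^2))
    rw [hψim] at him
    have hgauss : ∫ u : ℝ, Real.exp (-u^2) = Real.sqrt π := by
      have := integral_gaussian 1
      simpa using this
    rw [Measure.restrict_univ] at him
    rw [← hgauss, him]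
    apply setIntegral_congr_fun measurableSet_Ioi
    intro x hx
    have hx0 : (0:ℝ) < x := hx
    simp only [smul_eq_mul]
    have habs2 : |s * 1 - a * (-(x^2)⁻¹)| = s + a / x^2 := by
      rw [abs_of_pos (by
        have : (0:ℝ) < a * (x^2)⁻¹ := by positivity
        nlinarith)]
      field_simp
      ring
    rw [habs2]
  -- combine
  have split : ∫ x in Ioi (0:ℝ), (s + a / x^2) * h x
      = s * ((∫ x in Ioi (0:ℝ), h x) + ∫ x in Ioi (0:ℝ), (a / (s * x^2)) * h x) := by
    rw [← integral_add (heat_integrable s a hs ha) step1', ← integral_const_mul]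
    apply setIntegral_congr_fun measurableSet_Ioi
    intro x hx
    have hx0 : (0:ℝ) < x := hx
    have e : s * (a / (s * x ^ 2)) = a / x ^ 2 := by field_simp
    calc (s + a / x^2) * h x = s * h x + s * (a / (s * x ^ 2)) * h x := by rw [e]; ring
      _ = s * (h x + a / (s * x ^ 2) * h x) := by ring
  rw [split, ← step1] at step2
  have hπ : (0:ℝ) < Real.sqrt π := Real.sqrt_pos.2 pi_pos
  field_simp
  linarith [step2]

/-- `∫₀^∞ (1/√(4πt)) e^{−(r²/(4t) + t s²)} dt = e^{−rs}/(2s)` for `s, r > 0`. -/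
theorem integral_heat_kernel_one_half (s r : ℝ) (hs : 0 < s) (hr : 0 < r) :
    ∫ t in Set.Ioi (0 : ℝ),
        (1 / Real.sqrt (4 * π * t)) * Real.exp (-(r ^ 2 / (4 * t) + t * s ^ 2))
      = Real.exp (-(r * s)) / (2 * s) := by
  set F : ℝ → ℝ := fun t => (1 / Real.sqrt (4 * π * t)) * Real.exp (-(r ^ 2 / (4 * t) + t * s ^ 2))
    with hF
  have hgim : (fun x : ℝ => x^2) '' Ioi 0 = Ioi 0 := by
    ext y
    constructor
    · rintro ⟨x, hx, rfl⟩
      have hx0 : (0:ℝ) < x := hx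
      exact mem_Ioi.2 (by positivity)
    · intro hy
      have hy0 : (0:ℝ) < y := hy
      exact ⟨Real.sqrt y, mem_Ioi.2 (Real.sqrt_pos.2 hy0), Real.sq_sqrt hy0.le⟩
  have hginj : InjOn (fun x : ℝ => x^2) (Ioi 0) := by
    intro x hx y hy hxy
    have hx0 : (0:ℝ) < x := hx
    have hy0 : (0:ℝ) < y := hy
    simp only at hxy
    have h2 : (x - y) * (x + y) = 0 := by linear_combination hxy
    rcases mul_eq_zero.1 h2 with h3 | h3
    · linarith [sub_eq_zero.1 h3]
    · exact absurd h3 (ne_of_gt (by positivity))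
  have hgderiv : ∀ x ∈ Ioi (0:ℝ),
      HasDerivWithinAt (fun x : ℝ => x^2) (2 * x) (Ioi 0) x := by
    intro x hx
    simpa using (hasDerivAt_pow 2 x).hasDerivWithinAt
  have himg := integral_image_eq_integral_abs_deriv_smul measurableSet_Ioi hgderiv hginj F
  rw [hgim] at himg
  rw [himg]
  have hπ : (0:ℝ) < Real.sqrt π := Real.sqrt_pos.2 pi_pos
  have congr1 : ∀ x ∈ Ioi (0:ℝ),
      (fun x => |2 * x| • F (x^2)) x
        = (fun x => ((Real.sqrt π)⁻¹ * Real.exp (-(r*s)))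
            * Real.exp (-(s * x - (r/2) / x) ^ 2)) x := by
    intro x hx
    have hx0 : (0:ℝ) < x := hx
    simp only [smul_eq_mul, hF]
    rw [abs_of_pos (by positivity)]
    have hsq : Real.sqrt (4 * π * x^2) = 2 * Real.sqrt π * x := by
      rw [show 4 * π * x^2 = (2 * Real.sqrt π * x)^2 by
        rw [mul_pow, mul_pow, Real.sq_sqrt pi_pos.le]; ring]
      exact Real.sqrt_sq (by positivity)
    rw [hsq]
    rw [show -(r ^ 2 / (4 * x^2) + x^2 * s ^ 2) = -(r*s) + -(s * x - (r/2) / x) ^ 2 by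
      field_simp
      ring]
    rw [Real.exp_add]
    field_simp
  rw [setIntegral_congr_fun measurableSet_Ioi congr1, integral_const_mul,
    key_integral s (r/2) hs (by positivity)]
  field_simp
end
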